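/- For all n ≥ 1, s(n) ≥ 1; in particular s(n) > 0 for all n. -/

import Mathlib

/-!
With `t` the alternating partial sums of `a`, splitting the sums into even and odd indices
gives `s(2m+1) = s(m) + t(m)`, `t(2m+1) = s(m) - t(m)`, `s(2m+2) = s(m+1) + t(m)` and
`t(2m+2) = s(m+1) - t(m)`. Hence `s ≥ 1` follows by induction once `t ≥ 0`, and `t ≥ 0`
reduces to `t(m) ≤ s(m)` and `t(m) ≤ s(m+1)`. The only delicate case is `t(2l+1) ≤ s(2l+2)`,
i.e. `2 t(l) + a(l+1) ≥ 0`: since `t(l) ≡ l + 1 (mod 2)`, `t(l) = 0` forces `l` odd, and then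
`a(l+1) = t(l+1) ≥ 0`.
-/

def rs : ℕ → ℤ
  | 0 => 1
  | (n+1) =>
    if (n+1) % 2 = 0 then rs ((n+1)/2)
    else (-1)^((n+1)/2) * rs ((n+1)/2)
decreasing_by all_goals exact Nat.div_lt_self (Nat.succ_pos n) (by norm_num)

def s (n : ℕ) : ℤ := ∑ i ∈ Finset.range (n+1), rs i

def t (n : ℕ) : ℤ := ∑ i ∈ Finset.range (n+1), (-1)^i * rs i

lemma rs_zero : rs 0 = 1 := by
  rw [rs]

lemma rs_two_mul (m : ℕ) : rs (2 * m) = rs m := by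
  cases m with
  | zero => rfl
  | succ m =>
    rw [show 2 * (m + 1) = (2 * m + 1) + 1 by ring, rs]
    simp [show (2 * m + 1 + 1) % 2 = 0 by omega, show (2 * m + 1 + 1) / 2 = m + 1 by omega]

lemma rs_two_mul_add_one (m : ℕ) : rs (2 * m + 1) = (-1) ^ m * rs m := by
  rw [rs]
  simp [show (2 * m + 1) / 2 = m by omega]

lemma rs_one : rs 1 = 1 := by
  simpa [rs_zero] using rs_two_mul_add_one 0

lemma isUnit_rs (n : ℕ) : IsUnit (rs n) := by
  induction n using Nat.evenOddRec with
  | h0 => simp [rs_zero]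
  | h_even m h => rwa [rs_two_mul]
  | h_odd m h => rw [rs_two_mul_add_one]; exact (isUnit_one.neg.pow m).mul h

lemma s_zero : s 0 = 1 := by simp [s, rs_zero]

lemma t_zero : t 0 = 1 := by simp [t, rs_zero]

lemma s_succ (n : ℕ) : s (n + 1) = s n + rs (n + 1) := Finset.sum_range_succ _ _

lemma t_succ (n : ℕ) : t (n + 1) = t n + (-1) ^ (n + 1) * rs (n + 1) := Finset.sum_range_succ _ _

lemma odd_t_add (n : ℕ) : Odd (t n + n) := by
  induction n with
  | zero => simp [t_zero]
  | succ n ih =>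
    have hstep : Even ((-1) ^ (n + 1) * rs (n + 1) + 1) := by
      rcases Int.isUnit_iff.mp ((isUnit_one.neg.pow (n + 1)).mul (isUnit_rs (n + 1))) with h | h <;>
        simp [h]
    rw [t_succ, Nat.cast_succ]
    convert ih.add_even hstep using 1
    ring

lemma s_two_mul_add_one (m : ℕ) : s (2 * m + 1) = s m + t m := by
  induction m with
  | zero => simp [s, t, Finset.sum_range_succ, rs_zero, rs_one]
  | succ m ih =>
    rw [show 2 * (m + 1) + 1 = 2 * m + 1 + 1 + 1 by ring, s_succ, s_succ, ih, s_succ, t_succ,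
      show 2 * m + 1 + 1 = 2 * (m + 1) by ring, rs_two_mul, rs_two_mul_add_one]
    ring

lemma t_two_mul_add_one (m : ℕ) : t (2 * m + 1) = s m - t m := by
  induction m with
  | zero => simp [s, t, Finset.sum_range_succ, rs_zero, rs_one]
  | succ m ih =>
    rw [show 2 * (m + 1) + 1 = 2 * m + 1 + 1 + 1 by ring, t_succ, t_succ, ih, s_succ, t_succ,
      show 2 * m + 1 + 1 = 2 * (m + 1) by ring, rs_two_mul, rs_two_mul_add_one,
      pow_succ, pow_mul, neg_one_sq, one_pow, one_mul]
    ring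

lemma s_two_mul_add_two (m : ℕ) : s (2 * m + 2) = s (m + 1) + t m := by
  rw [s_succ, s_two_mul_add_one, show 2 * m + 1 + 1 = 2 * (m + 1) by ring, rs_two_mul, s_succ]
  ring

lemma t_two_mul_add_two (m : ℕ) : t (2 * m + 2) = s (m + 1) - t m := by
  rw [t_succ, t_two_mul_add_one, show 2 * m + 1 + 1 = 2 * (m + 1) by ring, rs_two_mul, s_succ,
    pow_mul, neg_one_sq, one_pow, one_mul]
  ring

lemma Nat.eq_zero_or_exists_eq_two_mul_add_one_or_two (n : ℕ) :
    n = 0 ∨ ∃ m, n = 2 * m + 1 ∨ n = 2 * m + 2 := by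
  obtain ⟨_ | m, rfl | rfl⟩ := Nat.even_or_odd' n
  · exact Or.inl rfl
  · exact Or.inr ⟨0, Or.inl rfl⟩
  · exact Or.inr ⟨m, Or.inr (by ring)⟩
  · exact Or.inr ⟨m + 1, Or.inl rfl⟩

lemma t_le_s (n : ℕ) (h : ∀ i < n, 0 ≤ t i) : t n ≤ s n := by
  rcases Nat.eq_zero_or_exists_eq_two_mul_add_one_or_two n with rfl | ⟨m, rfl | rfl⟩
  · rw [t_zero, s_zero]
  · rw [t_two_mul_add_one, s_two_mul_add_one]
    linarith [h m (by omega)]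
  · rw [t_two_mul_add_two, s_two_mul_add_two]
    linarith [h m (by omega)]

lemma t_le_s_succ (n : ℕ) (h : ∀ i ≤ n, 0 ≤ t i) : t n ≤ s (n + 1) := by
  rcases Nat.eq_zero_or_exists_eq_two_mul_add_one_or_two n with rfl | ⟨m, rfl | rfl⟩
  · rw [t_zero, s_two_mul_add_one 0, s_zero, t_zero]
    norm_num
  · rw [t_two_mul_add_one, s_two_mul_add_two, s_succ]
    have htm := h m (by omega)
    rcases Int.isUnit_iff.mp (isUnit_rs (m + 1)) with hrs | hrs
    · linarith
    obtain htm_zero | htm_pos := htm.eq_or_lt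
    · have hm : Odd m := by simpa [← htm_zero] using odd_t_add m
      have htm_succ := h (m + 1) (by omega)
      rw [t_succ, hm.add_one.neg_one_pow, hrs, ← htm_zero] at htm_succ
      norm_num at htm_succ
    · linarith
  · rw [t_two_mul_add_two, show 2 * m + 2 + 1 = 2 * (m + 1) + 1 by ring, s_two_mul_add_one]
    linarith [h m (by omega), h (m + 1) (by omega)]

lemma t_nonneg (n : ℕ) : 0 ≤ t n := by
  induction n using Nat.strong_induction_on with
  | _ n ih =>
    rcases Nat.eq_zero_or_exists_eq_two_mul_add_one_or_two n with rfl | ⟨m, rfl | rfl⟩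
    · rw [t_zero]
      exact zero_le_one
    · rw [t_two_mul_add_one, sub_nonneg]
      exact t_le_s m fun i hi => ih i (by omega)
    · rw [t_two_mul_add_two, sub_nonneg]
      exact t_le_s_succ m fun i hi => ih i (by omega)

lemma one_le_s (n : ℕ) : 1 ≤ s n := by
  induction n using Nat.strong_induction_on with
  | _ n ih =>
    rcases Nat.eq_zero_or_exists_eq_two_mul_add_one_or_two n with rfl | ⟨m, rfl | rfl⟩
    · rw [s_zero]
    · rw [s_two_mul_add_one]
      linarith [ih m (by omega), t_nonneg m]
    · rw [s_two_mul_add_two]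
      linarith [ih (m + 1) (by omega), t_nonneg m]

theorem stmt6 : (∀ n : ℕ, 1 ≤ n → 1 ≤ s n) ∧ (∀ n : ℕ, 0 < s n) :=
  ⟨fun n _ => one_le_s n, fun n => one_le_s n⟩
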